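/- arXiv:1508.01300 — 7 statements merged into one kernel-verified Lean document; each statement's English description precedes it below -/
import Mathlib

section
/- (Proposition 2.2, Norris) For a port-numbered graph with n vertices and any two vertices u and v: V(u) = V(v) if and only if V^{n−1}(u) = V^{n−1}(v). -/
/-- A port-numbered graph on vertex type `V`: a finite connected simple graph in which,
at every vertex `v` of degree `deg v`, the incident edges are labeled by distinct port
numbers `0, …, deg v - 1`.  `next v i = some (u, j)` means that the edge with port
number `i` at `v` leads to the vertex `u`, at which it has port number `j`. -/
structure PortGraph (V : Type*) [Fintype V] where
  /-- the degree of each vertex -/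
  deg : V → ℕ
  /-- `next v i = some (u, j)` iff the edge with port `i` at `v` has `u` as its other
  endpoint, where it carries port number `j` -/
  next : V → ℕ → Option (V × ℕ)
  /-- exactly the ports `0, …, deg v - 1` are present at `v` -/
  next_isSome : ∀ v i, (next v i).isSome ↔ i < deg v
  /-- the port labeling is consistent at the two endpoints of every edge -/
  next_symm : ∀ v i u j, next v i = some (u, j) → next u j = some (v, i)
  /-- no self-loops -/
  next_ne : ∀ v i u j, next v i = some (u, j) → u ≠ v
  /-- no multiple edges: distinct ports at `v` lead to distinct neighbors -/
  next_inj : ∀ v i i' u j j', next v i = some (u, j) → next v i' = some (u, j') → i = i'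
  /-- the graph is connected -/
  connected : ∀ u v : V, Relation.ReflTransGen (fun a b => ∃ i j, next a i = some (b, j)) u v

namespace PortGraph

variable {V : Type*} [Fintype V]

/-- `P.viewEq t u v` means that the views of `u` and `v` truncated at depth `t` are equal:
`V^t(u) = V^t(v)`. -/
def viewEq (P : PortGraph V) : ℕ → V → V → Prop
  | 0, u, v => P.deg u = P.deg v
  | t + 1, u, v =>
      P.deg u = P.deg v ∧
        ∀ (i j j' : ℕ) (u' v' : V),
          P.next u i = some (u', j) → P.next v i = some (v', j') →
          j = j' ∧ viewEq P t u' v'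

/-- `P.ViewEq u v` means that the (infinite) views of `u` and `v` are equal:
`V(u) = V(v)`, i.e. `V^t(u) = V^t(v)` for every `t`. -/
def ViewEq (P : PortGraph V) (u v : V) : Prop := ∀ t, P.viewEq t u v

theorem viewEq_refl (P : PortGraph V) : ∀ t (u : V), P.viewEq t u u
  | 0, _ => rfl
  | t + 1, u => ⟨rfl, fun i j j' u' v' h1 h2 => by
      rw [h1] at h2
      obtain ⟨rfl, rfl⟩ : u' = v' ∧ j = j' := by
        simpa [Prod.ext_iff] using h2
      exact ⟨rfl, P.viewEq_refl t u'⟩⟩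

theorem viewEq_symm (P : PortGraph V) : ∀ t (u v : V), P.viewEq t u v → P.viewEq t v u
  | 0, _, _, h => h.symm
  | t + 1, u, v, ⟨hd, h⟩ => ⟨hd.symm, fun i j j' u' v' h1 h2 => by
      obtain ⟨hj, hv⟩ := h i j' j v' u' h2 h1
      exact ⟨hj.symm, P.viewEq_symm t _ _ hv⟩⟩

theorem viewEq_trans (P : PortGraph V) :
    ∀ t (u v w : V), P.viewEq t u v → P.viewEq t v w → P.viewEq t u w
  | 0, _, _, _, h, h' => h.trans h'
  | t + 1, u, v, w, ⟨hd, h⟩, ⟨hd', h'⟩ => ⟨hd.trans hd', fun i j j' u' w' h1 h2 => by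
      have hi : i < P.deg v := by rw [← hd, ← P.next_isSome, h1]; rfl
      obtain ⟨⟨v', jv⟩, hv⟩ := Option.isSome_iff_exists.mp ((P.next_isSome v i).mpr hi)
      obtain ⟨hj1, hw1⟩ := h i j jv u' v' h1 hv
      obtain ⟨hj2, hw2⟩ := h' i jv j' v' w' hv h2
      exact ⟨hj1.trans hj2, P.viewEq_trans t _ _ _ hw1 hw2⟩⟩

theorem viewEq_succ (P : PortGraph V) :
    ∀ t (u v : V), P.viewEq (t + 1) u v → P.viewEq t u v
  | 0, _, _, h => h.1
  | t + 1, u, v, ⟨hd, h⟩ => ⟨hd, fun i j j' u' v' h1 h2 =>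
      ⟨(h i j j' u' v' h1 h2).1, P.viewEq_succ t _ _ (h i j j' u' v' h1 h2).2⟩⟩

theorem viewEq_anti (P : PortGraph V) {s t : ℕ} (hst : s ≤ t) {u v : V}
    (h : P.viewEq t u v) : P.viewEq s u v := by
  induction t with
  | zero => exact (Nat.le_zero.mp hst) ▸ h
  | succ t ih =>
    rcases Nat.lt_or_ge s (t + 1) with hlt | hge
    · exact ih (by omega) (P.viewEq_succ t u v h)
    · have : s = t + 1 := le_antisymm hst hge
      exact this ▸ h

theorem step_up (P : PortGraph V) (t : ℕ)
    (H : ∀ u v : V, P.viewEq t u v → P.viewEq (t + 1) u v) :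
    ∀ u v : V, P.viewEq (t + 1) u v → P.viewEq (t + 2) u v :=
  fun _ _ ⟨hd, h⟩ => ⟨hd, fun i j j' u' v' h1 h2 =>
    ⟨(h i j j' u' v' h1 h2).1, H _ _ (h i j j' u' v' h1 h2).2⟩⟩

theorem H_up (P : PortGraph V) (t : ℕ)
    (H : ∀ u v : V, P.viewEq t u v → P.viewEq (t + 1) u v) :
    ∀ k (u v : V), P.viewEq (t + k) u v → P.viewEq (t + k + 1) u v := by
  intro k
  induction k with
  | zero => exact H
  | succ k ih => exact P.step_up (t + k) ih

theorem stable_up (P : PortGraph V) (t : ℕ)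
    (H : ∀ u v : V, P.viewEq t u v → P.viewEq (t + 1) u v) :
    ∀ k (u v : V), P.viewEq t u v → P.viewEq (t + k) u v := by
  intro k
  induction k with
  | zero => exact fun _ _ h => h
  | succ k ih => exact fun u v h => P.H_up t H k u v (ih u v h)

/-- The setoid of depth-`t` view equivalence. -/
def viewSetoid (P : PortGraph V) (t : ℕ) : Setoid V :=
  ⟨P.viewEq t, ⟨P.viewEq_refl t, fun h => P.viewEq_symm t _ _ h,
    fun h h' => P.viewEq_trans t _ _ _ h h'⟩⟩

theorem exists_stable (P : PortGraph V) [Nonempty V] (n : ℕ) (hn : Fintype.card V = n) :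
    ∃ t < n, ∀ u v : V, P.viewEq t u v → P.viewEq (t + 1) u v := by
  classical
  by_contra hc
  push_neg at hc
  have key : ∀ t ≤ n, t + 1 ≤ Fintype.card (Quotient (P.viewSetoid t)) := by
    intro t ht
    induction t with
    | zero =>
      have : 0 < Fintype.card (Quotient (P.viewSetoid 0)) :=
        Fintype.card_pos_iff.mpr ⟨Quotient.mk'' (Classical.arbitrary V)⟩
      omega
    | succ t ih =>
      have h1 := ih (by omega)
      obtain ⟨a, b, hab, hnab⟩ := hc t (by omega)
      set f : Quotient (P.viewSetoid (t + 1)) → Quotient (P.viewSetoid t) :=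
        Quotient.map' id (fun x y h => P.viewEq_succ t x y h) with hf
      have hsurj : Function.Surjective f := by
        intro q
        induction q using Quotient.inductionOn' with
        | h x => exact ⟨Quotient.mk'' x, rfl⟩
      have hle : Fintype.card (Quotient (P.viewSetoid t)) ≤
          Fintype.card (Quotient (P.viewSetoid (t + 1))) :=
        Fintype.card_le_of_surjective f hsurj
      by_contra hcon
      push_neg at hcon
      have hcard : Fintype.card (Quotient (P.viewSetoid (t + 1))) =
          Fintype.card (Quotient (P.viewSetoid t)) := by omega
      have hbij : Function.Bijective f :=
        (Fintype.bijective_iff_surjective_and_card f).mpr ⟨hsurj, hcard⟩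
      have : f (Quotient.mk'' a) = f (Quotient.mk'' b) := by
        show Quotient.mk'' a = Quotient.mk'' b
        exact Quotient.sound' hab
      have := hbij.1 this
      exact hnab (Quotient.exact' this)
  have h1 := key n le_rfl
  have h2 : Fintype.card (Quotient (P.viewSetoid n)) ≤ n := by
    calc Fintype.card (Quotient (P.viewSetoid n)) ≤ Fintype.card V :=
          Fintype.card_le_of_surjective (Quotient.mk'') (Quotient.mk''_surjective)
      _ = n := hn
  omega

end PortGraph

/-- (Proposition 2.2, Norris) For a port-numbered graph with `n` vertices and any two
vertices `u` and `v`: `V(u) = V(v)` if and only if `V^{n-1}(u) = V^{n-1}(v)`. -/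
theorem viewEq_iff_viewEq_card_sub_one {V : Type*} [Fintype V] (P : PortGraph V)
    (n : ℕ) (hn : Fintype.card V = n) (u v : V) :
    P.ViewEq u v ↔ P.viewEq (n - 1) u v := by
  constructor
  · intro h
    exact h (n - 1)
  · intro h t
    have hne : Nonempty V := ⟨u⟩
    have hn1 : 1 ≤ n := by rw [← hn]; exact Fintype.card_pos
    obtain ⟨t₀, ht₀, H⟩ := P.exists_stable n hn
    rcases le_or_gt t (n - 1) with hle | hlt
    · exact P.viewEq_anti hle h
    · have h0 : P.viewEq t₀ u v := P.viewEq_anti (by omega) h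
      have := P.stable_up t₀ H (t - t₀) u v h0
      rwa [show t₀ + (t - t₀) = t by omega] at this
end

section
/- In a port-numbered graph, suppose vertices v and v' satisfy V(v) = V(v'), and suppose following a port sequence s = (p_1,…,p_ℓ) from v leads to a vertex w, while following the same port sequence s from v' leads to a vertex w'. Then V(w) = V(w'). -/
namespace PortGraph

variable {V : Type*} [Fintype V]

/-- Following a port sequence `s` from a vertex `v`: at each step, traverse the edge whose
port number at the current vertex is the next element of `s` (if such an edge exists).
`P.follow v s = some w` means every step is defined and the walk ends at `w`. -/
def follow (P : PortGraph V) : V → List ℕ → Option V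
  | v, [] => some v
  | v, p :: s =>
      match P.next v p with
      | some (u, _) => follow P u s
      | none => none

end PortGraph

/-- If `V(v) = V(v')` and following a port sequence `s` from `v` leads to `w`, while
following the same port sequence from `v'` leads to `w'`, then `V(w) = V(w')`. -/
theorem ViewEq_of_follow {V : Type*} [Fintype V] (P : PortGraph V) (v v' w w' : V)
    (s : List ℕ) (hvv' : P.ViewEq v v')
    (hw : P.follow v s = some w) (hw' : P.follow v' s = some w') :
    P.ViewEq w w' := by
  induction s generalizing v v' with
  | nil =>
    simp only [PortGraph.follow, Option.some.injEq] at hw hw'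
    subst hw hw'; exact hvv'
  | cons p s ih =>
    simp only [PortGraph.follow] at hw hw'
    rcases h : P.next v p with _ | ⟨u, j⟩
    · rw [h] at hw; exact absurd hw (by simp)
    rcases h' : P.next v' p with _ | ⟨u', j'⟩
    · rw [h'] at hw'; exact absurd hw' (by simp)
    rw [h] at hw; rw [h'] at hw'
    refine ih u u' ?_ hw hw'
    intro t
    exact ((hvv' (t + 1)).2 p j j' u u' h h').2
end

section
/- In a port-numbered graph, let w and w' be vertices with V^{ℓ+t}(w) = V^{ℓ+t}(w') for integers ℓ, t ≥ 0, and suppose following a port sequence s = (p_1,…,p_ℓ) of length ℓ from w leads to a vertex v. Then following the same port sequence s from w' is also defined, it leads to some vertex v', and V^{t}(v) = V^{t}(v'). -/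
/-- If `V^{ℓ+t}(w) = V^{ℓ+t}(w')` and following a port sequence `s` of length `ℓ` from `w`
leads to a vertex `v`, then following `s` from `w'` is also defined, leading to some
vertex `v'`, and `V^t(v) = V^t(v')`. -/
theorem follow_isSome_and_viewEq {V : Type*} [Fintype V] (P : PortGraph V) (w w' v : V)
    (s : List ℕ) (t : ℕ) (h : P.viewEq (s.length + t) w w')
    (hv : P.follow w s = some v) :
    ∃ v' : V, P.follow w' s = some v' ∧ P.viewEq t v v' := by
  induction s generalizing w w' v with
  | nil =>
    simp only [PortGraph.follow] at hv
    cases hv; exact ⟨w', rfl, by simpa using h⟩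
  | cons p rest ih =>
    simp only [PortGraph.follow] at hv ⊢
    cases hw : P.next w p with
    | none => rw [hw] at hv; simp at hv
    | some uj =>
      obtain ⟨u, j⟩ := uj
      rw [hw] at hv
      have hlen : (p :: rest).length + t = (rest.length + t) + 1 := by
        simp [Nat.add_comm, Nat.add_assoc, Nat.add_left_comm]
      rw [hlen] at h
      obtain ⟨hdeg, hstep⟩ := h
      have hp : p < P.deg w' := by
        rw [← hdeg, ← P.next_isSome, hw]; simp
      have hsome : (P.next w' p).isSome := (P.next_isSome w' p).2 hp
      cases hw' : P.next w' p with
      | none => rw [hw'] at hsome; simp at hsome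
      | some uj' =>
        obtain ⟨u', j'⟩ := uj'
        obtain ⟨-, hview⟩ := hstep p j j' u u' hw hw'
        exact ih u u' v hview hv
end

section
/- (Core of Theorem 4.3, part 1) For every integer k ≥ 2 there exists a connected 3-regular port-numbered graph G_k on 5·2^k − 4 vertices, of diameter at most 4k+2, in which all vertices have identical views: V(u) = V(v) for all vertices u, v of G_k. -/
namespace PortGraph

variable {V : Type*} [Fintype V]

/-- adjacency relation of a port-numbered graph -/
def Adj (P : PortGraph V) (a b : V) : Prop := ∃ i j, P.next a i = some (b, j)

/-- the underlying simple graph of a port-numbered graph -/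
def toSimpleGraph (P : PortGraph V) : SimpleGraph V where
  Adj := P.Adj
  symm := by
    constructor
    rintro a b ⟨i, j, h⟩
    exact ⟨j, i, P.next_symm a i b j h⟩
  loopless := by
    constructor
    rintro a ⟨i, j, h⟩
    exact P.next_ne a i a j h rfl

/-- `P.IsDiameter D` means that the diameter of `P` (the maximum distance between two
vertices) equals `D`. -/
def IsDiameter (P : PortGraph V) (D : ℕ) : Prop :=
  (∀ u v : V, P.toSimpleGraph.dist u v ≤ D) ∧ ∃ u v : V, P.toSimpleGraph.dist u v = D

end PortGraph

open Function

section ReachesWithin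

variable {α : Type*}

inductive ReachesWithin (F : ℕ → α → α) (d : ℕ) : ℕ → α → α → Prop
  | refl (r : ℕ) (a : α) : ReachesWithin F d r a a
  | step {r c : ℕ} {a b : α} :
      c < d → ReachesWithin F d r (F c a) b → ReachesWithin F d (r + 1) a b

namespace ReachesWithin

variable {F : ℕ → α → α} {d r s : ℕ} {u v w : α}

theorem mono (h : ReachesWithin F d r u v) (hrs : r ≤ s) : ReachesWithin F d s u v := by
  induction h generalizing s with
  | refl r a => exact .refl s a
  | step hc _ ih =>
    obtain ⟨s, rfl⟩ : ∃ s', s = s' + 1 := ⟨s - 1, by omega⟩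
    exact .step hc (ih (by omega))

theorem trans (h₁ : ReachesWithin F d r u v) (h₂ : ReachesWithin F d s v w) :
    ReachesWithin F d (r + s) u w := by
  induction h₁ with
  | refl r a => exact h₂.mono (by omega)
  | step hc _ ih => rw [add_right_comm]; exact .step hc (ih h₂)

theorem symm (hF : ∀ c < d, ∀ a, F c (F c a) = a) (h : ReachesWithin F d r u v) :
    ReachesWithin F d r v u := by
  induction h with
  | refl r a => exact .refl r a
  | step hc _ ih => exact ih.trans (.step hc (hF _ hc _ ▸ .refl 0 _))

theorem of_semiconj {β : Type*} {G : ℕ → β → β} {e : α → β} (he : Injective e)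
    (hFG : ∀ c a, e (F c a) = G c (e a)) (h : ReachesWithin G d r (e u) (e v)) :
    ReachesWithin F d r u v := by
  generalize hx : e u = x, hy : e v = y at h
  induction h generalizing u with
  | refl r a => exact he (hx.trans hy.symm) ▸ .refl r u
  | step hc _ ih => exact .step hc (ih (by rw [hFG, hx]) hy)

theorem reflTransGen {R : α → α → Prop} (hR : ∀ c < d, ∀ a, R a (F c a))
    (h : ReachesWithin F d r u v) : Relation.ReflTransGen R u v := by
  induction h with
  | refl => exact .refl
  | step hc _ ih => exact .head (hR _ hc _) ih

theorem exists_walk {G : SimpleGraph α} (hG : ∀ c < d, ∀ a, G.Adj a (F c a))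
    (h : ReachesWithin F d r u v) : ∃ p : G.Walk u v, p.length ≤ r := by
  induction h with
  | refl => exact ⟨.nil, by simp⟩
  | step hc _ ih =>
    obtain ⟨p, hp⟩ := ih
    exact ⟨.cons (hG _ hc _) p, by simpa using hp⟩

theorem dist_le {G : SimpleGraph α} (hG : ∀ c < d, ∀ a, G.Adj a (F c a))
    (h : ReachesWithin F d r u v) : G.dist u v ≤ r :=
  let ⟨p, hp⟩ := h.exists_walk hG
  (SimpleGraph.dist_le p).trans hp

end ReachesWithin

end ReachesWithin

namespace PortGraph

variable {V : Type*} {d : ℕ} {F : ℕ → V → V}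

def coloringNext (d : ℕ) (F : ℕ → V → V) (v : V) (i : ℕ) : Option (V × ℕ) :=
  if i < d then some (F i v, i) else none

theorem coloringNext_eq_some {v u : V} {i j : ℕ} :
    coloringNext d F v i = some (u, j) ↔ i < d ∧ F i v = u ∧ j = i := by
  unfold coloringNext
  split_ifs with hi <;> simp [hi, eq_comm]

variable [Fintype V]

def ofColoring (d : ℕ) (F : ℕ → V → V) (hinv : ∀ c < d, ∀ v, F c (F c v) = v)
    (hne : ∀ c < d, ∀ v, F c v ≠ v)
    (hinj : ∀ c < d, ∀ c' < d, ∀ v, F c v = F c' v → c = c')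
    (hconn : ∀ u v, ∃ r, ReachesWithin F d r u v) : PortGraph V where
  deg _ := d
  next := coloringNext d F
  next_isSome v i := by unfold coloringNext; split_ifs with h <;> simp [h]
  next_symm v i u j h := by
    obtain ⟨hi, rfl, rfl⟩ := coloringNext_eq_some.1 h
    exact coloringNext_eq_some.2 ⟨hi, hinv _ hi v, rfl⟩
  next_ne v i u j h := by
    obtain ⟨hi, rfl, -⟩ := coloringNext_eq_some.1 h
    exact hne i hi v
  next_inj v i i' u j j' h h' := by
    obtain ⟨hi, rfl, -⟩ := coloringNext_eq_some.1 h
    obtain ⟨hi', hu, -⟩ := coloringNext_eq_some.1 h'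
    exact hinj i hi i' hi' v hu.symm
  connected u v :=
    (hconn u v).choose_spec.reflTransGen fun c hc _ =>
      ⟨c, c, coloringNext_eq_some.2 ⟨hc, rfl, rfl⟩⟩

variable {hinv : ∀ c < d, ∀ v, F c (F c v) = v} {hne : ∀ c < d, ∀ v, F c v ≠ v}
  {hinj : ∀ c < d, ∀ c' < d, ∀ v, F c v = F c' v → c = c'}
  {hconn : ∀ u v, ∃ r, ReachesWithin F d r u v}

theorem viewEq_ofColoring (t : ℕ) (u v : V) :
    (ofColoring d F hinv hne hinj hconn).viewEq t u v := by
  induction t generalizing u v with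
  | zero => rfl
  | succ t ih =>
    refine ⟨rfl, fun i j j' u' v' hu hv => ?_⟩
    obtain ⟨-, rfl, rfl⟩ := coloringNext_eq_some.1 hu
    obtain ⟨-, rfl, rfl⟩ := coloringNext_eq_some.1 hv
    exact ⟨rfl, ih _ _⟩

theorem dist_ofColoring_le {r : ℕ} {u v : V} (h : ReachesWithin F d r u v) :
    (ofColoring d F hinv hne hinj hconn).toSimpleGraph.dist u v ≤ r :=
  h.dist_le fun c hc _ => ⟨c, c, coloringNext_eq_some.2 ⟨hc, rfl, rfl⟩⟩

end PortGraph

namespace GluedTrees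

def color : ℕ → ℕ
  | x => if x < 4 then 0 else (color (x / 2) + 1 + x % 2) % 3

theorem color_lt_three (x : ℕ) : color x < 3 := by
  rw [color]; split <;> omega

theorem color_of_lt_four {x : ℕ} (h : x < 4) : color x = 0 := by
  rw [color, if_pos h]

theorem color_of_four_le {x : ℕ} (h : 4 ≤ x) : color x = (color (x / 2) + 1 + x % 2) % 3 := by
  rw [color, if_neg (by omega)]

theorem color_two_mul {x : ℕ} (h : 2 ≤ x) : color (2 * x) = (color x + 1) % 3 := by
  rw [color_of_four_le (by omega)]; simp [Nat.mul_mod_right]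

theorem color_two_mul_add_one {x : ℕ} (h : 2 ≤ x) :
    color (2 * x + 1) = (color x + 2) % 3 := by
  rw [color_of_four_le (by omega), show (2 * x + 1) / 2 = x by omega]; omega

/-- Both roots `2` and `3` have color `0`, so the color of `x` does not depend on the bit of `x`
just below its leading one. -/
theorem color_add_two_pow (j : ℕ) {x : ℕ} (h₁ : 2 ^ (j + 2) ≤ x)
    (h₂ : x < 3 * 2 ^ (j + 1)) : color (x + 2 ^ (j + 1)) = color x := by
  induction j generalizing x with
  | zero =>
    have hc₂ : color 2 = 0 := color_of_lt_four (by norm_num)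
    have hc₃ : color 3 = 0 := color_of_lt_four (by norm_num)
    rw [color_of_four_le (by omega), color_of_four_le (x := x) (by omega),
      show (x + 2 ^ (0 + 1)) / 2 = 3 by omega, show x / 2 = 2 by omega]
    omega
  | succ j ih =>
    have e₁ : 2 ^ (j + 1 + 2) = 2 * 2 ^ (j + 2) := pow_succ' 2 (j + 2)
    have e₂ : 2 ^ (j + 2) = 2 * 2 ^ (j + 1) := pow_succ' 2 (j + 1)
    rw [color_of_four_le (by omega), color_of_four_le (x := x) (by omega),
      show (x + 2 ^ (j + 1 + 1)) / 2 = x / 2 + 2 ^ (j + 1) by omega, ih (by omega) (by omega)]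
    omega

/-- `a x`, `b x`: the node with heap index `x ∈ [2, 2^(k+1))` of `A`, resp. `B`;
`m x`: the middle vertex attached to the leaves `x ∈ [2^k, 2^(k+1))`. -/
inductive Node
  | a (x : ℕ)
  | b (x : ℕ)
  | m (x : ℕ)

namespace Node

def Valid (k : ℕ) : Node → Prop
  | a x | b x => 2 ≤ x ∧ x < 2 * 2 ^ k
  | m x => 2 ^ k ≤ x ∧ x < 2 * 2 ^ k

end Node

open Node

def step (k c : ℕ) : Node → Node
  | a x =>
    if c = color x then (if x < 4 then a (5 - x) else a (x / 2))
    else if c = (color x + 1) % 3 then (if x < 2 ^ k then a (2 * x) else m x)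
    else if x < 2 ^ k then a (2 * x + 1) else b x
  | b x =>
    if c = (color x + 1) % 3 then (if x < 4 then b (5 - x) else b (x / 2))
    else if c = (color x + 2) % 3 then (if x < 2 ^ k then b (2 * x) else a x)
    else if x < 2 ^ k then b (2 * x + 1) else m x
  | m x =>
    if c = color x then b x
    else if c = (color x + 1) % 3 then a x
    else m (if x < 2 ^ k + 2 ^ k / 2 then x + 2 ^ k / 2 else x - 2 ^ k / 2)

variable {k : ℕ}

theorem step_valid (hk : 1 ≤ k) (c : ℕ) {n : Node} (hn : n.Valid k) : (step k c n).Valid k := by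
  have : 2 ≤ 2 ^ k := le_self_pow₀ one_le_two (by omega)
  cases n <;> simp only [step, Valid] at hn ⊢ <;> split_ifs <;> omega

theorem step_ne (hk : 1 ≤ k) (c : ℕ) {n : Node} (hn : n.Valid k) : step k c n ≠ n := by
  have : 2 ≤ 2 ^ k := le_self_pow₀ one_le_two (by omega)
  cases n <;> simp only [step, Valid] at hn ⊢ <;> split_ifs <;> simp <;> omega

theorem step_injective_color {c c' : ℕ} (hc : c < 3) (hc' : c' < 3) {n : Node}
    (h : step k c n = step k c' n) : c = c' := by
  cases n <;> rename_i x <;> have := color_lt_three x <;> simp only [step] at h <;>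
    split_ifs at h <;> simp at h <;> omega

theorem step_step (hk : 2 ≤ k) {c : ℕ} (hc : c < 3) {n : Node} (hn : n.Valid k) :
    step k c (step k c n) = n := by
  obtain ⟨j, rfl⟩ : ∃ j, k = j + 2 := ⟨k - 2, by omega⟩
  have e : 2 ^ (j + 2) = 2 * 2 ^ (j + 1) := pow_succ' 2 (j + 1)
  have : 2 ≤ 2 ^ (j + 1) := le_self_pow₀ one_le_two (by omega)
  -- The color facts below say that both endpoints of every edge give it the same color.
  cases n with
  | m x =>
    obtain ⟨h₁, h₂⟩ := hn
    have := color_lt_three x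
    have := color_add_two_pow j (x := x)
    have := color_add_two_pow j (x := x - 2 ^ (j + 1))
    rw [show x - 2 ^ (j + 1) + 2 ^ (j + 1) = x by omega] at this
    have half : 2 ^ (j + 2) / 2 = 2 ^ (j + 1) := by omega
    simp only [step, half]; split_ifs <;> dsimp only <;> split_ifs <;> (try simp) <;> omega
  | _ x =>
    obtain ⟨h₁, h₂⟩ := hn
    have := color_lt_three x
    have := color_lt_three (x / 2)
    have := color_two_mul h₁
    have := color_two_mul_add_one h₁
    by_cases h4 : x < 4
    · have := color_of_lt_four h4
      have := color_of_lt_four (x := 5 - x) (by omega)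
      simp only [step]; split_ifs <;> dsimp only <;> split_ifs <;> (try simp) <;> omega
    · have := color_of_four_le (by omega : 4 ≤ x)
      simp only [step]; split_ifs <;> dsimp only <;> split_ifs <;> (try simp) <;> omega

theorem reachesWithin_a_two {j x : ℕ} (h₁ : 2 ≤ x) (h₂ : x < 2 ^ (j + 1)) :
    ReachesWithin (step k) 3 j (a x) (a 2) := by
  induction j generalizing x with
  | zero => omega
  | succ j ih =>
    by_cases h4 : x < 4
    · obtain rfl | rfl : x = 2 ∨ x = 3 := by omega
      · exact .refl _ _
      · exact .step (c := 0) (by norm_num) (by simpa [step, color_of_lt_four] using .refl j (a 2))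
    · have hx : step k (color x) (a x) = a (x / 2) := by simp [step, h4]
      exact .step (color_lt_three x) (hx ▸ ih (by omega) (by rw [pow_succ] at h₂; omega))

theorem reachesWithin_b_leaf {x : ℕ} (h₀ : 2 ≤ x) (h₁ : 2 ^ k ≤ x)
    (h₂ : x < 2 * 2 ^ k) :
    ReachesWithin (step k) 3 (k + 1) (b x) (a 2) := by
  have := color_lt_three x
  have hx : step k ((color x + 2) % 3) (b x) = a x := by
    simp only [step]; split_ifs <;> first | rfl | omega
  exact .step (by omega) (hx ▸ reachesWithin_a_two (by omega) (by rw [pow_succ]; omega))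

theorem reachesWithin_b {j x : ℕ} (h₁ : 2 ≤ x) (h₂ : x < 2 * 2 ^ k)
    (h₃ : 2 ^ k ≤ x * 2 ^ j) :
    ReachesWithin (step k) 3 (j + k + 1) (b x) (a 2) := by
  induction j generalizing x with
  | zero => simpa using reachesWithin_b_leaf h₁ (by simpa using h₃) h₂
  | succ j ih =>
    by_cases hleaf : 2 ^ k ≤ x
    · exact (reachesWithin_b_leaf h₁ hleaf h₂).mono (by omega)
    · have := color_lt_three x
      have hx : step k ((color x + 2) % 3) (b x) = b (2 * x) := by
        simp only [step]; split_ifs <;> first | rfl | omega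
      refine .step (c := (color x + 2) % 3) (by omega) ?_
      rw [hx, add_right_comm]
      exact ih (by omega) (by omega) (by rw [pow_succ] at h₃; linarith)

theorem reachesWithin_m (hk : 1 ≤ k) {x : ℕ} (h₁ : 2 ^ k ≤ x) (h₂ : x < 2 * 2 ^ k) :
    ReachesWithin (step k) 3 (k + 1) (m x) (a 2) := by
  have : 2 ≤ 2 ^ k := le_self_pow₀ one_le_two (by omega)
  have := color_lt_three x
  have hx : step k ((color x + 1) % 3) (m x) = a x := by
    simp only [step]; split_ifs <;> first | rfl | omega
  exact .step (by omega) (hx ▸ reachesWithin_a_two (by omega) (by rw [pow_succ]; omega))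

theorem reachesWithin_a_two_of_valid (hk : 1 ≤ k) {n : Node} (hn : n.Valid k) :
    ReachesWithin (step k) 3 (2 * k + 1) n (a 2) := by
  cases n with
  | a x =>
    obtain ⟨h₁, h₂⟩ := hn
    exact (reachesWithin_a_two (j := k) h₁ (by rw [pow_succ]; omega)).mono (by omega)
  | b x =>
    obtain ⟨h₁, h₂⟩ := hn
    refine (reachesWithin_b (j := k - 1) h₁ h₂ ?_).mono (by omega)
    rw [← Nat.two_pow_pred_mul_two (by omega : 0 < k), mul_comm]
    exact Nat.mul_le_mul_right _ h₁
  | m x => exact (reachesWithin_m hk hn.1 hn.2).mono (by omega)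

def Node.encode (k : ℕ) : Node → ℕ
  | a x => x - 2
  | b x => x + 2 * 2 ^ k - 4
  | m x => x + 3 * 2 ^ k - 4

def decode (k v : ℕ) : Node :=
  if v < 2 * 2 ^ k - 2 then a (v + 2)
  else if v < 4 * 2 ^ k - 4 then b (v + 4 - 2 * 2 ^ k)
  else m (v + 4 - 3 * 2 ^ k)

theorem decode_valid {v : ℕ} (hv : v < 5 * 2 ^ k - 4) : (decode k v).Valid k := by
  unfold decode; split_ifs <;> simp only [Valid] <;> omega

theorem encode_decode (v : ℕ) : (decode k v).encode k = v := by
  unfold decode; split_ifs <;> simp only [encode] <;> omega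

theorem decode_encode {n : Node} (hn : n.Valid k) : decode k (n.encode k) = n := by
  have := @Nat.one_le_two_pow k
  cases n with
  | a x =>
    obtain ⟨h₁, h₂⟩ := hn
    rw [encode, decode, if_pos (by omega)]; congr 1; omega
  | b x =>
    obtain ⟨h₁, h₂⟩ := hn
    rw [encode, decode, if_neg (by omega), if_pos (by omega)]; congr 1; omega
  | m x =>
    obtain ⟨h₁, h₂⟩ := hn
    rw [encode, decode, if_neg (by omega), if_neg (by omega)]; congr 1; omega

/-- Holds for every `k` (for `k = 0` only by truncated subtraction), so `nbr` needs no hypothesis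
on `k`. -/
theorem encode_step_decode_lt (c : ℕ) {v : ℕ} (hv : v < 5 * 2 ^ k - 4) :
    (step k c (decode k v)).encode k < 5 * 2 ^ k - 4 := by
  unfold decode
  split_ifs <;> simp only [step] <;> split_ifs <;> simp only [encode] <;> omega

def nbr (k c : ℕ) (v : Fin (5 * 2 ^ k - 4)) : Fin (5 * 2 ^ k - 4) :=
  ⟨(step k c (decode k v)).encode k, encode_step_decode_lt c v.2⟩

theorem decode_injective : Injective fun v : Fin (5 * 2 ^ k - 4) => decode k v :=
  fun u v h => Fin.ext <| (encode_decode u).symm.trans <| (congrArg (Node.encode k) h).trans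
    (encode_decode v)

theorem decode_nbr (hk : 1 ≤ k) (c : ℕ) (v : Fin (5 * 2 ^ k - 4)) :
    decode k (nbr k c v) = step k c (decode k v) :=
  decode_encode (step_valid hk c (decode_valid v.2))

theorem nbr_nbr (hk : 2 ≤ k) {c : ℕ} (hc : c < 3) (v : Fin (5 * 2 ^ k - 4)) :
    nbr k c (nbr k c v) = v :=
  decode_injective <| by
    simp only [decode_nbr (by omega : 1 ≤ k), step_step hk hc (decode_valid v.2)]

theorem nbr_ne (hk : 1 ≤ k) (c : ℕ) (v : Fin (5 * 2 ^ k - 4)) : nbr k c v ≠ v := fun h =>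
  step_ne hk c (decode_valid v.2) (by rw [← decode_nbr hk, h])

theorem nbr_injective_color (hk : 1 ≤ k) {c c' : ℕ} (hc : c < 3) (hc' : c' < 3)
    {v : Fin (5 * 2 ^ k - 4)} (h : nbr k c v = nbr k c' v) : c = c' :=
  step_injective_color hc hc' (by rw [← decode_nbr hk, ← decode_nbr hk, h])

theorem exists_forall_reachesWithin_nbr (hk : 2 ≤ k) :
    ∃ v₀, ∀ v : Fin (5 * 2 ^ k - 4), ReachesWithin (nbr k) 3 (2 * k + 1) v v₀ := by
  have : 4 ≤ 2 ^ k := (pow_le_pow_right₀ one_le_two hk).trans_eq' (by norm_num)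
  have h₀ : decode k 0 = a 2 := by simp only [decode]; split_ifs <;> first | rfl | omega
  refine ⟨⟨0, by omega⟩, fun v => .of_semiconj decode_injective (decode_nbr (by omega)) ?_⟩
  rw [h₀]
  exact reachesWithin_a_two_of_valid (by omega) (decode_valid v.2)

end GluedTrees

/-- (Core of Theorem 4.3, part 1) For every `k ≥ 2` there exists a connected 3-regular
port-numbered graph on `5 · 2^k − 4` vertices, of diameter at most `4k + 2`, in which
all vertices have identical views. -/
theorem exists_symmetric_graph_small_diameter (k : ℕ) (hk : 2 ≤ k) :
    ∃ P : PortGraph (Fin (5 * 2 ^ k - 4)),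
      (∀ v : Fin (5 * 2 ^ k - 4), P.deg v = 3) ∧
      (∀ u v : Fin (5 * 2 ^ k - 4), P.toSimpleGraph.dist u v ≤ 4 * k + 2) ∧
      (∀ u v : Fin (5 * 2 ^ k - 4), P.ViewEq u v) := by
  obtain ⟨v₀, hv₀⟩ := GluedTrees.exists_forall_reachesWithin_nbr hk
  have hinv : ∀ c < 3, ∀ v, GluedTrees.nbr k c (GluedTrees.nbr k c v) = v :=
    fun _ hc => GluedTrees.nbr_nbr hk hc
  have hreach (u v : Fin (5 * 2 ^ k - 4)) : ReachesWithin (GluedTrees.nbr k) 3 (4 * k + 2) u v :=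
    ((hv₀ u).trans ((hv₀ v).symm hinv)).mono (by omega)
  refine ⟨.ofColoring 3 (GluedTrees.nbr k) hinv (fun c _ => GluedTrees.nbr_ne (by omega) c)
      (fun _ hc _ hc' _ => GluedTrees.nbr_injective_color (by omega) hc hc')
      (fun u v => ⟨_, hreach u v⟩),
    fun _ => rfl, fun u v => PortGraph.dist_ofColoring_le (hreach u v),
    fun u v t => PortGraph.viewEq_ofColoring t u v⟩
end

section
/- (Core of Theorem 4.3, part 2) For every integer k ≥ 2 there exist two port-numbered graphs G and G', both on n = 5·2^k − 4 vertices, such that: all vertices of G are 3-regular and have identical views (so G has two distinct vertices with equal views); G' has exactly one vertex of degree 1 (hence a vertex with a unique view, and all views of G' are pairwise distinct); and G' contains a vertex w whose view truncated at depth 2^k − 1 equals the common view truncated at depth 2^k − 1 of the vertices of G. -/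
namespace PortGraph

/-- Equality of truncated views of vertices of two (possibly different) port-numbered
graphs: `viewEq2 P Q t u v` means `V^t(u) = V^t(v)`, where the view of `u` is taken in `P`
and the view of `v` is taken in `Q`. -/
def viewEq2 {V W : Type*} [Fintype V] [Fintype W] (P : PortGraph V) (Q : PortGraph W) :
    ℕ → V → W → Prop
  | 0, u, v => P.deg u = Q.deg v
  | t + 1, u, v =>
      P.deg u = Q.deg v ∧
        ∀ (i j j' : ℕ) (u' : V) (v' : W),
          P.next u i = some (u', j) → Q.next v i = some (v', j') →
          j = j' ∧ viewEq2 P Q t u' v'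

/-- Equality of the (infinite) views of a vertex of `P` and a vertex of `Q`. -/
def ViewEq2 {V W : Type*} [Fintype V] [Fintype W] (P : PortGraph V) (Q : PortGraph W)
    (u : V) (v : W) : Prop := ∀ t, viewEq2 P Q t u v

end PortGraph

/-!
`G` is the Möbius ladder on `n = 5·2^k − 4 = 2m` vertices, the Cayley graph of `ℤ/n` whose
ports `0, 1, 2` lead from `v` to `v + 1`, `v − 1`, `v + m`. Translations preserve ports, so all
its views coincide.

`G'` is a ladder with `2T + 1` rungs, `T = 2^k − 1`, closed by a twist and carrying a pendant
path. Up to distance `T` from the middle of the ladder, the map sending the ladder onto an arc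
of the Möbius ladder and its rungs onto chords is a port-preserving covering, so the middle
vertex has the depth-`T` view of the Möbius ladder. The end of the pendant path is the only
vertex of degree `1`, and a vertex with a unique view forces all views to be distinct.
-/

open Fin.CommRing in
theorem Fin.natCast_eq_natCast_of_eq_or_eq_add {n x y : ℕ} [NeZero n]
    (h : x = y ∨ x = y + n) : (x : Fin n) = y := by
  rcases h with rfl | rfl <;> simp

namespace PortGraph

section Views

variable {V W X : Type*} [Fintype V] [Fintype W] [Fintype X]

theorem lt_deg_of_next_eq_some (P : PortGraph V) {v u : V} {i j : ℕ}
    (h : P.next v i = some (u, j)) : i < P.deg v :=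
  (P.next_isSome v i).1 (by simp [h])

theorem exists_next_of_lt_deg (P : PortGraph V) {v : V} {i : ℕ} (h : i < P.deg v) :
    ∃ u j, P.next v i = some (u, j) := by
  obtain ⟨⟨u, j⟩, huj⟩ := Option.isSome_iff_exists.1 ((P.next_isSome v i).2 h)
  exact ⟨u, j, huj⟩

theorem viewEq2_trans {P : PortGraph V} {Q : PortGraph W} {R : PortGraph X} {t : ℕ}
    {u : V} {v : W} {w : X} (h₁ : viewEq2 P Q t u v) (h₂ : viewEq2 Q R t v w) :
    viewEq2 P R t u w := by
  induction t generalizing u v w with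
  | zero => exact h₁.trans h₂
  | succ t ih =>
    obtain ⟨hd₁, h₁⟩ := h₁
    obtain ⟨hd₂, h₂⟩ := h₂
    refine ⟨hd₁.trans hd₂, fun i j j' u' w' hu hw => ?_⟩
    obtain ⟨v', k, hv⟩ := Q.exists_next_of_lt_deg (hd₁ ▸ P.lt_deg_of_next_eq_some hu)
    obtain ⟨rfl, hu'⟩ := h₁ i j k u' v' hu hv
    obtain ⟨rfl, hw'⟩ := h₂ i j j' v' w' hv hw
    exact ⟨rfl, ih hu' hw'⟩

/-- `r x` bounds the depth to which `f` looks like a port-preserving covering map around `x`. -/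
theorem viewEq2_of_forall_next {P : PortGraph V} {Q : PortGraph W} (f : V → W) (r : V → ℕ)
    (hdeg : ∀ x, 0 < r x → P.deg x = Q.deg (f x))
    (hnext : ∀ x, 1 < r x → ∀ i y j, P.next x i = some (y, j) →
      Q.next (f x) i = some (f y, j) ∧ r x ≤ r y + 1)
    {t : ℕ} {x : V} (hx : t < r x) : viewEq2 P Q t x (f x) := by
  induction t generalizing x with
  | zero => exact hdeg x hx
  | succ t ih =>
    refine ⟨hdeg x (by omega), fun i j j' y y' hy hy' => ?_⟩
    obtain ⟨hfy, hr⟩ := hnext x (by omega) i y j hy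
    obtain ⟨rfl, rfl⟩ : f y = y' ∧ j = j' := by simpa [hfy] using hy'
    exact ⟨rfl, ih (by omega)⟩

theorem ViewEq2.of_forall_next {P : PortGraph V} {Q : PortGraph W} (f : V → W)
    (hdeg : ∀ x, P.deg x = Q.deg (f x))
    (hnext : ∀ x i y j, P.next x i = some (y, j) → Q.next (f x) i = some (f y, j))
    (x : V) : ViewEq2 P Q x (f x) := fun t =>
  viewEq2_of_forall_next f (fun _ => t + 1) (fun x _ => hdeg x)
    (fun x _ i y j h => ⟨hnext x i y j h, Nat.le_succ _⟩) (Nat.lt_succ_self t)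

theorem ViewEq2.exists_next {P : PortGraph V} {u v u' : V} {i j : ℕ} (H : ViewEq2 P P u v)
    (h : P.next u i = some (u', j)) : ∃ v', P.next v i = some (v', j) ∧ ViewEq2 P P u' v' := by
  obtain ⟨v', j', hv⟩ := P.exists_next_of_lt_deg (H 0 ▸ P.lt_deg_of_next_eq_some h)
  obtain rfl := ((H 1).2 i j j' u' v' h hv).1
  exact ⟨v', hv, fun t => ((H (t + 1)).2 i j j u' v' h hv).2⟩

/-- From `v`, the port sequence of a path from `u` to `z` leads to a vertex with the view of `z`,
that is, to `z` itself; retracing the path backwards, ports determine the way, so `u = v`. -/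
theorem ViewEq2.eq_of_unique {P : PortGraph V} {z : V} (hz : ∀ y, ViewEq2 P P z y → y = z)
    {u v : V} (H : ViewEq2 P P u v) : u = v := by
  suffices ∀ a, Relation.ReflTransGen (fun a b => ∃ i j, P.next a i = some (b, j)) u a →
      ∃ b, ViewEq2 P P a b ∧ (a = b → u = v) by
    obtain ⟨b, hzb, hb⟩ := this z (P.connected u z)
    exact hb (hz b hzb).symm
  intro a ha
  induction ha with
  | refl => exact ⟨v, H, id⟩
  | tail _ hstep ih =>
    obtain ⟨b, hab, hb⟩ := ih
    obtain ⟨i, j, hstep⟩ := hstep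
    obtain ⟨b', hb', hab'⟩ := hab.exists_next hstep
    refine ⟨b', hab', fun h => hb ?_⟩
    subst h
    simpa using (P.next_symm _ _ _ _ hstep).symm.trans (P.next_symm _ _ _ _ hb')

theorem ViewEq2.eq_of_existsUnique_deg {P : PortGraph V} {d : ℕ} (hd : ∃! z, P.deg z = d)
    {u v : V} (H : ViewEq2 P P u v) : u = v := by
  obtain ⟨z, hz, hz'⟩ := hd
  exact H.eq_of_unique fun y hy => hz' y ((hy 0).symm.trans hz)

end Views

section Cayley

variable {V : Type*} [AddCommGroup V]

def cayleyNext (a c v : V) (p : ℕ) : Option (V × ℕ) :=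
  if p = 0 then some (v + a, 1)
  else if p = 1 then some (v - a, 0)
  else if p = 2 then some (v + c, 2)
  else none

@[simp] theorem cayleyNext_zero (a c v : V) : cayleyNext a c v 0 = some (v + a, 1) := rfl

@[simp] theorem cayleyNext_one (a c v : V) : cayleyNext a c v 1 = some (v - a, 0) := rfl

@[simp] theorem cayleyNext_two (a c v : V) : cayleyNext a c v 2 = some (v + c, 2) := rfl

theorem cayleyNext_add {a c v u g : V} {p j : ℕ} (h : cayleyNext a c v p = some (u, j)) :
    cayleyNext a c (v + g) p = some (u + g, j) := by
  unfold cayleyNext at h ⊢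
  split_ifs at h ⊢ <;> cases h <;> simp [add_right_comm, sub_add_eq_add_sub]

variable [Fintype V] (a c : V) (hc : c + c = 0) (hc₀ : c ≠ 0) (ha : a + a ≠ 0) (hac : a ≠ c)
  (hgen : ∀ x, ∃ k : ℕ, k • a = x)

def cayley : PortGraph V where
  deg _ := 3
  next := cayleyNext a c
  next_isSome v p := by unfold cayleyNext; split_ifs <;> simp <;> omega
  next_symm v p u j h := by
    unfold cayleyNext at h ⊢
    split_ifs at h <;> simp only [Option.some.injEq, Prod.mk.injEq] at h <;>
      obtain ⟨rfl, rfl⟩ := h <;> subst_vars <;> simp [add_assoc, hc]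
  next_ne v p u j h := by
    have ha₀ : a ≠ 0 := by rintro rfl; simp at ha
    unfold cayleyNext at h
    split_ifs at h <;> cases h <;> simpa
  next_inj v p p' u j j' h h' := by
    have h₁ : a ≠ -a := fun h => ha (by nth_rewrite 2 [h]; exact add_neg_cancel a)
    have h₂ : -a ≠ c := fun h => hac (by rw [← neg_neg a, h, neg_eq_of_add_eq_zero_right hc])
    unfold cayleyNext at h h'
    split_ifs at h h' <;> simp only [Option.some.injEq, Prod.mk.injEq] at h h' <;>
      obtain ⟨rfl, rfl⟩ := h <;> first
      | omega
      | simp_all [sub_eq_add_neg, h₁.symm, h₂.symm, hac.symm]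
  connected u v := by
    obtain ⟨k, hk⟩ := hgen (v - u)
    rw [show v = u + k • a by rw [hk, add_sub_cancel]]
    clear hk
    induction k with
    | zero => simpa using Relation.ReflTransGen.refl
    | succ k ih => exact ih.tail ⟨0, 1, by simp [cayleyNext, succ_nsmul, add_assoc]⟩

theorem ViewEq2.cayley (u v : V) :
    ViewEq2 (cayley a c hc hc₀ ha hac hgen) (cayley a c hc hc₀ ha hac hgen) u v := by
  simpa using ViewEq2.of_forall_next (· + (v - u)) (fun _ => rfl)
    (fun _ _ _ _ h => cayleyNext_add (a := a) (c := c) h) u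

end Cayley

section MobiusLadder

open Fin.CommRing

variable {n m : ℕ} [NeZero n]

def mobiusLadder (hn : n = 2 * m) (hm : 2 ≤ m) : PortGraph (Fin n) :=
  cayley 1 (m : Fin n)
    (by rw [← Nat.cast_add, ← two_mul, ← hn, Fin.natCast_self])
    (by rw [Ne, Fin.natCast_eq_zero]; exact fun h => by have := Nat.le_of_dvd (by omega) h; omega)
    (by
      rw [Ne, ← Nat.cast_one, ← Nat.cast_add, Fin.natCast_eq_zero]
      exact fun h => by have := Nat.le_of_dvd (by omega) h; omega)
    (by
      rw [Ne, Fin.ext_iff, Fin.val_one', Fin.val_natCast, Nat.mod_eq_of_lt (by omega : 1 < n),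
        Nat.mod_eq_of_lt (by omega : m < n)]
      omega)
    (fun x => ⟨x.val, by simp⟩)

theorem ViewEq2.mobiusLadder (hn : n = 2 * m) (hm : 2 ≤ m) (u v : Fin n) :
    ViewEq2 (mobiusLadder hn hm) (mobiusLadder hn hm) u v :=
  ViewEq2.cayley _ _ _ _ _ _ _ u v

end MobiusLadder

section Ladder

def ladderNext (T v p : ℕ) : Option (ℕ × ℕ) :=
  if v < 3 * T then
    if p = 0 then (if v = 3 * T - 1 then some (5 * T, 0) else some (v + 1, 1))
    else if p = 1 then (if v = 0 then none else some (v - 1, 0))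
    else if p = 2 then
      (if T - 2 ≤ v ∧ v ≤ 3 * T - 2 then some (v + (2 * T + 2), if v = T - 2 then 1 else 2)
        else none)
    else none
  else
    if p = 0 then (if v = 5 * T then some (3 * T - 1, 0) else some (v + 1, 1))
    else if p = 1 then (if v = 3 * T then some (T - 2, 2) else some (v - 1, 0))
    else if p = 2 then (if 3 * T < v then some (v - (2 * T + 2), 2) else none)
    else none

def ladderDeg (T v : ℕ) : ℕ :=
  if v = 0 then 1 else if v < T - 2 then 2 else if v = 3 * T - 1 ∨ v = 3 * T then 2 else 3

variable {T v p u j : ℕ}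

theorem ladderNext_isSome (hT : 3 ≤ T) :
    (ladderNext T v p).isSome ↔ p < ladderDeg T v := by
  unfold ladderNext ladderDeg; split_ifs <;> simp <;> omega

theorem ladderNext_le (hv : v ≤ 5 * T) (h : ladderNext T v p = some (u, j)) : u ≤ 5 * T := by
  unfold ladderNext at h; split_ifs at h <;> simp at h <;> omega

theorem ladderNext_ne (hT : 3 ≤ T) (h : ladderNext T v p = some (u, j)) : u ≠ v := by
  unfold ladderNext at h; split_ifs at h <;> simp at h <;> omega

theorem ladderNext_inj {p' j' : ℕ} (hT : 3 ≤ T) (h : ladderNext T v p = some (u, j))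
    (h' : ladderNext T v p' = some (u, j')) : p = p' := by
  unfold ladderNext at h h'; split_ifs at h h' <;> simp at h h' <;> omega

theorem ladderNext_symm (hT : 3 ≤ T) (hv : v ≤ 5 * T) (h : ladderNext T v p = some (u, j)) :
    ladderNext T u j = some (v, p) := by
  unfold ladderNext at h ⊢
  split_ifs at h <;> simp only [Option.some.injEq, Prod.mk.injEq] at h <;>
    obtain ⟨rfl, rfl⟩ := h <;> split_ifs <;> first | rfl | contradiction | omega | (simp; omega)

theorem ladderNext_one_lt (hv₀ : 0 < v) :
    ∃ u j, ladderNext T v 1 = some (u, j) ∧ u < v := by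
  unfold ladderNext; split_ifs <;> first | contradiction | (simp; omega)

theorem ladderDeg_eq_one : ladderDeg T v = 1 ↔ v = 0 := by
  unfold ladderDeg; split_ifs <;> omega

open Fin.CommRing

variable {n : ℕ} [NeZero n]

theorem map_ladderNext_eq_some (hn : n = 5 * T + 1) {x y : Fin n} :
    (ladderNext T x p).map (Prod.map Nat.cast id) = some (y, j) ↔
      ladderNext T x p = some (y.val, j) := by
  rw [Option.map_eq_some_iff]
  constructor
  · rintro ⟨⟨u, j⟩, h, hu⟩
    obtain ⟨rfl, rfl⟩ := Prod.mk.inj hu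
    rwa [Fin.val_cast_of_lt (by have := ladderNext_le (by omega) h; omega)]
  · exact fun h => ⟨_, h, by simp⟩

theorem map_ladderNext_symm (hT : 3 ≤ T) (hn : n = 5 * T + 1) {x y : Fin n}
    (h : (ladderNext T x p).map (Prod.map Nat.cast id) = some (y, j)) :
    (ladderNext T y j).map (Prod.map Nat.cast id) = some (x, p) :=
  (map_ladderNext_eq_some hn).2 (ladderNext_symm hT (by omega) ((map_ladderNext_eq_some hn).1 h))

/-- Two paths `0, …, 3T-1` and `3T, …, 5T`, joined by the rungs `v ~ v + (2T+2)` for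
`T-2 ≤ v ≤ 3T-2` and the edge `3T-1 ~ 5T`: a ladder with `2T+1` rungs, closed by a twist,
with a pendant path ending at `0`. -/
def ladder (hT : 3 ≤ T) (hn : n = 5 * T + 1) : PortGraph (Fin n) where
  deg x := ladderDeg T x
  next x p := (ladderNext T x p).map (Prod.map Nat.cast id)
  next_isSome x p := by
    rw [Option.isSome_map, ladderNext_isSome hT]
  next_symm _ _ _ _ := map_ladderNext_symm hT hn
  next_ne x p y j h :=
    fun hyx => ladderNext_ne hT ((map_ladderNext_eq_some hn).1 h) (by rw [hyx])
  next_inj x p p' y j j' h h' :=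
    ladderNext_inj hT ((map_ladderNext_eq_some hn).1 h) ((map_ladderNext_eq_some hn).1 h')
  connected x y := by
    let adj (a b : Fin n) := ∃ i j, (ladderNext T a i).map (Prod.map Nat.cast id) = some (b, j)
    have : Std.Symm adj := ⟨fun _ _ ⟨i, j, h⟩ => ⟨j, i, map_ladderNext_symm hT hn h⟩⟩
    have hroot (a : Fin n) : Relation.ReflTransGen adj a 0 := by
      induction ha : a.val using Nat.strong_induction_on generalizing a with
      | _ v ih =>
        rcases Nat.eq_zero_or_pos v with rfl | hv₀
        · rw [show a = 0 from Fin.ext ha]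
        obtain ⟨u, j, hu, huv⟩ := ladderNext_one_lt hv₀
        have hun : u < n := by omega
        refine .head ⟨1, j, (map_ladderNext_eq_some hn).2 ?_⟩ (ih u huv ⟨u, hun⟩ rfl)
        rwa [ha]
    exact (hroot x).trans (Std.Symm.symm _ _ (hroot y))

theorem ladder_existsUnique_deg_eq_one (hT : 3 ≤ T) (hn : n = 5 * T + 1) :
    ∃! z, (ladder hT hn).deg z = 1 :=
  ⟨0, by simp [ladder, ladderDeg], fun y hy =>
    Fin.ext (ladderDeg_eq_one.1 hy)⟩

end Ladder

section LadderCover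

variable {T m v p u j : ℕ}

def ladderRadius (T v : ℕ) : ℕ :=
  if v < 3 * T then min (v + 3 - T) (3 * T - 1 - v) else min (v - 3 * T) (5 * T - v)

def ladderProj (T m v : ℕ) : ℕ :=
  if v < 3 * T then v else v - (2 * T + 2) + m

theorem ladderDeg_eq_three_of_radius_pos (hT : 3 ≤ T) (hv : 0 < ladderRadius T v) :
    ladderDeg T v = 3 := by
  unfold ladderRadius at hv; unfold ladderDeg; split_ifs at hv ⊢ <;> omega

open Fin.CommRing

variable {n : ℕ} [NeZero n]

theorem cayleyNext_ladderProj (hT : 3 ≤ T) (hm : n = 2 * m)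
    (hv : 1 < ladderRadius T v) (h : ladderNext T v p = some (u, j)) :
    cayleyNext (1 : Fin n) m (ladderProj T m v) p = some ((ladderProj T m u : Fin n), j) ∧
      ladderRadius T v ≤ ladderRadius T u + 1 := by
  unfold ladderRadius at hv
  unfold ladderNext at h
  split_ifs at h hv <;> simp only [Option.some.injEq, Prod.mk.injEq] at h <;>
    obtain ⟨rfl, rfl⟩ := h <;> subst_vars <;>
    first | omega | refine ⟨?_, by unfold ladderRadius; split_ifs <;> omega⟩
  all_goals
    simp only [cayleyNext_zero, cayleyNext_one, cayleyNext_two, ladderProj, Option.some.injEq,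
      Prod.mk.injEq, and_true]
    split_ifs <;> first | (exfalso; omega) | skip
  all_goals
    first
    | exact (Nat.cast_succ _).symm.trans (Fin.natCast_eq_natCast_of_eq_or_eq_add (by omega))
    | exact sub_eq_iff_eq_add.2
        ((Fin.natCast_eq_natCast_of_eq_or_eq_add (by omega)).trans (Nat.cast_succ _))
    | exact (Nat.cast_add _ _).symm.trans (Fin.natCast_eq_natCast_of_eq_or_eq_add (by omega))

theorem ladder_viewEq2_mobiusLadder (hT : 3 ≤ T) (hn : n = 5 * T + 1) (hm : n = 2 * m)
    (v : Fin n) :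
    viewEq2 (ladder hT hn) (mobiusLadder hm (by omega)) T ⟨2 * T - 2, by omega⟩ v := by
  have hw := viewEq2_of_forall_next (P := ladder hT hn) (Q := mobiusLadder hm (by omega))
    (fun x => (ladderProj T m x : Fin n)) (fun x => ladderRadius T x)
    (fun x hx => ladderDeg_eq_three_of_radius_pos hT hx)
    (fun _ hx _ _ _ hy => cayleyNext_ladderProj hT hm hx ((map_ladderNext_eq_some hn).1 hy))
    (x := ⟨2 * T - 2, by omega⟩) (t := T) (by simp only [ladderRadius]; split_ifs <;> omega)
  exact viewEq2_trans hw (ViewEq2.mobiusLadder hm _ _ v T)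

end LadderCover

end PortGraph

/-- (Core of Theorem 4.3, part 2) For every `k ≥ 2` there exist two port-numbered graphs
`G` and `G'`, both on `n = 5 · 2^k − 4` vertices, such that: all vertices of `G` are
3-regular and have identical views (so `G` has two distinct vertices with equal views);
`G'` has exactly one vertex of degree 1 (hence a vertex with a unique view, and all views
of `G'` are pairwise distinct); and `G'` contains a vertex `w` whose view truncated at
depth `2^k − 1` equals the common view, truncated at depth `2^k − 1`, of the vertices
of `G`. -/
theorem exists_strong_LE_lower_bound_pair (k : ℕ) (hk : 2 ≤ k) :
    ∃ (G G' : PortGraph (Fin (5 * 2 ^ k - 4))),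
      (∀ v : Fin (5 * 2 ^ k - 4), G.deg v = 3) ∧
      (∀ u v : Fin (5 * 2 ^ k - 4), PortGraph.ViewEq2 G G u v) ∧
      (∃ u v : Fin (5 * 2 ^ k - 4), u ≠ v ∧ PortGraph.ViewEq2 G G u v) ∧
      (∃! z : Fin (5 * 2 ^ k - 4), G'.deg z = 1) ∧
      (∀ u v : Fin (5 * 2 ^ k - 4), PortGraph.ViewEq2 G' G' u v → u = v) ∧
      (∃ w : Fin (5 * 2 ^ k - 4), ∀ v : Fin (5 * 2 ^ k - 4),
        PortGraph.viewEq2 G' G (2 ^ k - 1) w v) := by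
  obtain ⟨j, rfl⟩ : ∃ j, k = j + 2 := ⟨k - 2, by omega⟩
  have hpow : 2 ^ (j + 2) = 4 * 2 ^ j := by ring
  have hpos : 0 < 2 ^ j := by positivity
  have : NeZero (5 * 2 ^ (j + 2) - 4) := ⟨by omega⟩
  have hT : 3 ≤ 2 ^ (j + 2) - 1 := by omega
  have hn : 5 * 2 ^ (j + 2) - 4 = 5 * (2 ^ (j + 2) - 1) + 1 := by omega
  have hm : 5 * 2 ^ (j + 2) - 4 = 2 * (10 * 2 ^ j - 2) := by omega
  have h01 : (0 : Fin (5 * 2 ^ (j + 2) - 4)) ≠ 1 := by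
    rw [Ne, Fin.ext_iff, Fin.val_zero, Fin.val_one', Nat.mod_eq_of_lt (by omega)]
    omega
  exact ⟨PortGraph.mobiusLadder hm (by omega), PortGraph.ladder hT hn, fun _ => rfl,
    PortGraph.ViewEq2.mobiusLadder hm _, ⟨0, 1, h01, PortGraph.ViewEq2.mobiusLadder hm _ 0 1⟩,
    PortGraph.ladder_existsUnique_deg_eq_one hT hn,
    fun _ _ => PortGraph.ViewEq2.eq_of_existsUnique_deg
      (PortGraph.ladder_existsUnique_deg_eq_one hT hn),
    ⟨_, PortGraph.ladder_viewEq2_mobiusLadder hT hn hm⟩⟩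
end

section
/- In a port-numbered graph, all equivalence classes of the relation 'V(u) = V(v)' on the vertex set have the same cardinality. -/
namespace PortGraph

variable {V : Type*} [Fintype V]

lemma viewEq_deg (P : PortGraph V) {t : ℕ} {u v : V} (h : P.viewEq t u v) :
    P.deg u = P.deg v := by
  cases t with
  | zero => exact h
  | succ t => exact h.1

/-- Key step: if `u` and `u'` are adjacent via port `i` at `u` (port `j` at `u'`),
then the view class of `u` and the view class of `u'` have the same cardinality. -/
lemma ncard_step (P : PortGraph V) {u u' : V} {i j : ℕ}
    (h : P.next u i = some (u', j)) :
    Set.ncard {w : V | P.ViewEq w u} = Set.ncard {w : V | P.ViewEq w u'} := by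
  have hi : i < P.deg u := (P.next_isSome u i).1 (by rw [h]; rfl)
  have hj : j < P.deg u' := (P.next_isSome u' j).1 (by rw [P.next_symm u i u' j h]; rfl)
  set A : Set V := {w : V | P.ViewEq w u}
  set B : Set V := {w : V | P.ViewEq w u'}
  -- every w ∈ A has a well-defined neighbor via port i, which lies in B
  have hnbr : ∀ w ∈ A, ∃ w', P.next w i = some (w', j) ∧ w' ∈ B := by
    intro w hw
    have hdeg : P.deg w = P.deg u := P.viewEq_deg (hw 0)
    have hs : (P.next w i).isSome := (P.next_isSome w i).2 (hdeg ▸ hi)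
    obtain ⟨⟨w', jw⟩, hw'⟩ := Option.isSome_iff_exists.1 hs
    have hjw : jw = j := ((hw 1).2 i jw j w' u' hw' h).1
    rw [hjw] at hw'
    refine ⟨w', hw', fun t => ?_⟩
    exact ((hw (t + 1)).2 i j j w' u' hw' h).2
  set f : V → V := fun w => ((P.next w i).getD (w, 0)).1 with hf
  have hfval : ∀ w w', P.next w i = some (w', j) → f w = w' := by
    intro w w' hww'; simp [hf, hww']
  have hbij : Set.BijOn f A B := by
    refine ⟨?_, ?_, ?_⟩
    · intro w hw
      obtain ⟨w', hw', hwB⟩ := hnbr w hw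
      rwa [hfval w w' hw']
    · intro w1 h1 w2 h2 heq
      obtain ⟨w1', hw1', _⟩ := hnbr w1 h1
      obtain ⟨w2', hw2', _⟩ := hnbr w2 h2
      rw [hfval w1 w1' hw1', hfval w2 w2' hw2'] at heq
      subst heq
      have e1 := P.next_symm w1 i w1' j hw1'
      have e2 := P.next_symm w2 i w1' j hw2'
      have := e1.symm.trans e2
      exact congrArg Prod.fst (Option.some_inj.mp this)
    · intro w' hw'
      have hsymm := P.next_symm u i u' j h
      have hdeg : P.deg w' = P.deg u' := P.viewEq_deg (hw' 0)
      have hs : (P.next w' j).isSome := (P.next_isSome w' j).2 (hdeg ▸ hj)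
      obtain ⟨⟨w, iw⟩, hww⟩ := Option.isSome_iff_exists.1 hs
      have hiw : iw = i := ((hw' 1).2 j iw i w u hww hsymm).1
      rw [hiw] at hww
      have hwA : w ∈ A := fun t => ((hw' (t + 1)).2 j i i w u hww hsymm).2
      refine ⟨w, hwA, ?_⟩
      exact hfval w w' (P.next_symm w' j w i hww)
  rw [← hbij.image_eq, Set.ncard_image_of_injOn hbij.injOn]

end PortGraph

/-- In a port-numbered graph, all equivalence classes of the relation `V(u) = V(v)` on
the vertex set have the same cardinality. -/
theorem ncard_viewClass_eq {V : Type*} [Fintype V] (P : PortGraph V) (u v : V) :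
    Set.ncard {w : V | P.ViewEq w u} = Set.ncard {w : V | P.ViewEq w v} := by
  induction P.connected u v with
  | refl => rfl
  | tail _ step ih =>
    obtain ⟨i, j, hij⟩ := step
    exact ih.trans (P.ncard_step hij)
end

section
/- (Proposition 2.1, equivalence of conditions 2 and 3) In a port-numbered graph, all vertices have pairwise distinct views if and only if there exists a vertex with a unique view (i.e., a vertex v such that V(u) = V(v) implies u = v). -/
/-- (Proposition 2.1, equivalence of conditions 2 and 3) In a port-numbered graph, all
vertices have pairwise distinct views if and only if there exists a vertex with a unique
view. -/
theorem allDistinctViews_iff_exists_uniqueView {V : Type*} [Fintype V] [Nonempty V]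
    (P : PortGraph V) :
    (∀ u v : V, P.ViewEq u v → u = v) ↔ (∃ v : V, ∀ u : V, P.ViewEq u v → u = v) := by
  constructor
  · intro h
    obtain ⟨v⟩ := ‹Nonempty V›
    exact ⟨v, fun u hu => h u v hu⟩
  · rintro ⟨v, hv⟩ u w huw
    have key : ∀ x, Relation.ReflTransGen (fun a b => ∃ i j, P.next a i = some (b, j)) v x →
        ∀ y, P.ViewEq y x → y = x := by
      intro x hx
      induction hx with
      | refl => exact hv
      | @tail b c _ hstep ih =>
        obtain ⟨i, j, hbc⟩ := hstep
        intro y hy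
        have hcb : P.next c j = some (b, i) := P.next_symm _ _ _ _ hbc
        have hj : j < P.deg c := (P.next_isSome c j).mp (by rw [hcb]; rfl)
        have hdeg : P.deg y = P.deg c := (hy 0)
        have hysome : (P.next y j).isSome := (P.next_isSome y j).mpr (hdeg ▸ hj)
        obtain ⟨⟨p, q⟩, hpq⟩ := Option.isSome_iff_exists.mp hysome
        have hcond := fun t => ((hy (t+1)).2 j q i p b hpq hcb)
        have hq : q = i := (hcond 0).1
        have hpb : P.ViewEq p b := fun t => (hcond t).2
        have hpeq : p = b := ih p hpb
        subst hpeq; subst hq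
        have h2 := P.next_symm _ _ _ _ hpq
        rw [hbc] at h2
        simp only [Option.some.injEq, Prod.mk.injEq] at h2
        exact h2.1.symm
    exact key w (P.connected v w) u huw
end
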